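/- arXiv:2209.08882 — 11 statements merged into one kernel-verified Lean document; each statement's English description precedes it below -/
import Mathlib

section
/- Let N ≥ 2 be an integer, let α be a real number with 0 < α ≤ √N − 1, and let d and i be positive integers such that α ≤ N/(α+1) − d < α + 1 and α ≤ N/α − (d+i) ≤ α + 1 (i.e., d is the smallest digit and d+i the largest digit of the N-expansion map T_α, so that T_α has i+1 digits). Then d/α ≤ i < (d+1)/α + 2. -/
/-- Bounds on the number `i + 1` of possible digits of the `N`-expansion map `T_α`:
if `d` is the smallest digit and `d + i` the largest digit, then
`d/α ≤ i < (d+1)/α + 2`. -/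
theorem digit_count_bounds (N : ℕ) (hN : 2 ≤ N) (α : ℝ)
    (hα0 : 0 < α) (hα1 : α ≤ Real.sqrt N - 1)
    (d i : ℕ) (hd : 1 ≤ d) (hi : 1 ≤ i)
    (h1 : α ≤ (N : ℝ) / (α + 1) - d) (h2 : (N : ℝ) / (α + 1) - d < α + 1)
    (h3 : α ≤ (N : ℝ) / α - (d + i)) (h4 : (N : ℝ) / α - (d + i) ≤ α + 1) :
    (d : ℝ) / α ≤ i ∧ (i : ℝ) < (d + 1) / α + 2 := by
  have hα1' : (0:ℝ) < α + 1 := by linarith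
  have e1 : (α + d) * (α + 1) ≤ N := (le_div_iff₀ hα1').mp (by linarith)
  have e2 : (N : ℝ) < (α + 1 + d) * (α + 1) := by
    rw [← div_lt_iff₀ hα1']; linarith
  have e3 : (α + (d + i)) * α ≤ N := (le_div_iff₀ hα0).mp (by linarith)
  have e4 : (N : ℝ) ≤ (α + 1 + (d + i)) * α := by
    rw [← div_le_iff₀ hα0]; linarith
  constructor
  · rw [div_le_iff₀ hα0]; nlinarith
  · have key : (i : ℝ) * α < (d + 1) + 2 * α := by nlinarith
    rw [← lt_div_iff₀ hα0] at key
    calc (i : ℝ) < ((d + 1) + 2 * α) / α := key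
      _ = (d + 1) / α + 2 := by field_simp
end

section
/- For every integer N ≥ 5, the set S(N) = {(d, i) : d, i integers, d ≥ 1, i ≥ 2, N(i − 1) = d(d + i)} is finite and contains at least three elements, i.e., D(N) ≥ 3. -/
/-- For every integer `N ≥ 5` the set
`S(N) = {(d,i) : d ≥ 1, i ≥ 2, N(i−1) = d(d+i)}` is finite and `D(N) ≥ 3`. -/
theorem solution_set_at_least_three (N : ℤ) (hN : 5 ≤ N) :
    ({p : ℤ × ℤ | 1 ≤ p.1 ∧ 2 ≤ p.2 ∧ N * (p.2 - 1) = p.1 * (p.1 + p.2)}).Finite ∧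
    3 ≤ ({p : ℤ × ℤ | 1 ≤ p.1 ∧ 2 ≤ p.2 ∧ N * (p.2 - 1) = p.1 * (p.1 + p.2)}).ncard := by
  set S : Set (ℤ × ℤ) :=
    {p : ℤ × ℤ | 1 ≤ p.1 ∧ 2 ≤ p.2 ∧ N * (p.2 - 1) = p.1 * (p.1 + p.2)} with hSdef
  have hfin : S.Finite := by
    apply Set.Finite.subset ((Finset.Icc (1:ℤ) N ×ˢ Finset.Icc (2:ℤ) (N^2+N)).finite_toSet)
    rintro ⟨d, i⟩ ⟨hd, hi, heq⟩
    simp only [Finset.coe_product, Set.mem_prod, Finset.mem_coe, Finset.mem_Icc]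
    simp only at hd hi heq
    have h1 : i * (N - d) = N + d ^ 2 := by linear_combination heq
    have h2 : 1 ≤ N - d := by nlinarith
    have h3 : i ≤ N + d ^ 2 := by nlinarith [mul_le_mul_of_nonneg_left h2 (by linarith : (0:ℤ) ≤ i)]
    refine ⟨⟨hd, by linarith⟩, hi, ?_⟩
    nlinarith [mul_le_mul (by linarith : d ≤ N) (by linarith : d ≤ N) (by linarith : (0:ℤ) ≤ d) (by linarith : (0:ℤ) ≤ N)]
  refine ⟨hfin, ?_⟩
  have key : ∀ T : Set (ℤ × ℤ), T.ncard = 3 → T ⊆ S → 3 ≤ S.ncard := by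
    intro T hT hTS
    calc 3 = T.ncard := hT.symm
    _ ≤ S.ncard := Set.ncard_le_ncard hTS hfin
  rcases Int.even_or_odd N with ⟨m, hm⟩ | ⟨m, hm⟩
  · -- N = m + m
    have hm3 : 3 ≤ m := by omega
    apply key {(2*m-1, 4*m^2-2*m+1), (2*m-2, 2*m^2-3*m+2), (m, m+2)}
    · rw [Set.ncard_eq_three]
      refine ⟨_, _, _, ?_, ?_, ?_, rfl⟩
      · simp only [ne_eq, Prod.mk.injEq, not_and]; intro h; omega
      · simp only [ne_eq, Prod.mk.injEq, not_and]; intro h; omega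
      · simp only [ne_eq, Prod.mk.injEq, not_and]; intro h; omega
    · rintro p hp
      subst hm
      rcases hp with rfl | rfl | rfl
      · refine ⟨by omega, by dsimp only; nlinarith, by dsimp only; ring⟩
      · refine ⟨by omega, by dsimp only; nlinarith, by dsimp only; ring⟩
      · refine ⟨by omega, by omega, by dsimp only; ring⟩
  · -- N = 2*m + 1
    have hm2 : 2 ≤ m := by omega
    apply key {(2*m, 4*m^2+2*m+1), (2*m-1, 2*m^2-m+1), (m, m+1)}
    · rw [Set.ncard_eq_three]
      refine ⟨_, _, _, ?_, ?_, ?_, rfl⟩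
      · simp only [ne_eq, Prod.mk.injEq, not_and]; intro h; omega
      · simp only [ne_eq, Prod.mk.injEq, not_and]; intro h; omega
      · simp only [ne_eq, Prod.mk.injEq, not_and]; intro h; omega
    · rintro p hp
      subst hm
      rcases hp with rfl | rfl | rfl
      · refine ⟨by omega, by dsimp only; nlinarith, by dsimp only; ring⟩
      · refine ⟨by omega, by dsimp only; nlinarith, by dsimp only; ring⟩
      · refine ⟨by omega, by omega, by dsimp only; ring⟩
end

section
/- For every integer N ≥ 2, the cardinality D(N) of the set S(N) = {(d, i) : d, i integers, d ≥ 1, i ≥ 2, N(i − 1) = d(d + i)} satisfies D(N) ≤ (σ₀(N) − 1)(σ₀(N+1) − 1), where σ₀(n) denotes the number of positive divisors of n. -/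
/-!
Rewriting `N(i - 1) = d(d + i)` as `i(N - d) = N + d²` shows that `a = N - d` is positive
and divides `N + d² ≡ N(N + 1) (mod N - d)`; moreover `a < N` and `d` determines `i`.
As `N` and `N + 1` are coprime, `a = gcd(a, N) · gcd(a, N + 1)`, and each factor is a proper
divisor of `N`, resp. `N + 1`.
-/

open Finset Set

theorem Nat.card_properDivisors (n : ℕ) : #n.properDivisors = #n.divisors - 1 := by
  rcases eq_or_ne n 0 with rfl | hn
  · simp
  · rw [← Nat.cons_self_properDivisors hn, card_cons, Nat.add_sub_cancel]

section GcdPair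

variable {m n : ℕ}

theorem Nat.injOn_gcd_pair_of_coprime (hmn : m.Coprime n) :
    InjOn (fun a : ℕ ↦ (a.gcd m, a.gcd n)) {a | a ∣ m * n} := by
  intro a ha b hb hab
  rw [Prod.mk.injEq] at hab
  rw [← (Nat.gcd_mul_gcd_eq_iff_dvd_mul_of_coprime hmn).2 ha,
    ← (Nat.gcd_mul_gcd_eq_iff_dvd_mul_of_coprime hmn).2 hb, hab.1, hab.2]

theorem Nat.mapsTo_gcd_pair_properDivisors :
    MapsTo (fun a : ℕ ↦ (a.gcd m, a.gcd n)) {a | 0 < a ∧ a < m ∧ a < n}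
      (m.properDivisors ×ˢ n.properDivisors : Finset (ℕ × ℕ)) := by
  rintro a ⟨ha, ham, han⟩
  simp only [coe_product, mem_prod, mem_coe, Nat.mem_properDivisors]
  exact ⟨⟨Nat.gcd_dvd_right a m, (Nat.gcd_le_left m ha).trans_lt ham⟩,
    ⟨Nat.gcd_dvd_right a n, (Nat.gcd_le_left n ha).trans_lt han⟩⟩

end GcdPair

def solutionSet (N : ℕ) : Set (ℤ × ℤ) :=
  {p | 1 ≤ p.1 ∧ 2 ≤ p.2 ∧ (N : ℤ) * (p.2 - 1) = p.1 * (p.1 + p.2)}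

namespace solutionSet

variable {N : ℕ} {p : ℤ × ℤ}

theorem mul_sub_eq (hp : p ∈ solutionSet N) : p.2 * (N - p.1) = N + p.1 ^ 2 := by
  linear_combination hp.2.2

theorem sub_pos (hp : p ∈ solutionSet N) : 0 < (N : ℤ) - p.1 := by
  have h := mul_sub_eq hp
  have hi : 0 < p.2 := by linarith [hp.2.1]
  exact pos_of_mul_pos_right (by rw [h]; nlinarith [hp.1]) hi.le

theorem sub_dvd (hp : p ∈ solutionSet N) : (N : ℤ) - p.1 ∣ N * (N + 1) :=
  ⟨p.2 + N + p.1, by linear_combination -(mul_sub_eq hp)⟩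

theorem injOn_sub : InjOn (fun p : ℤ × ℤ ↦ (N : ℤ) - p.1) (solutionSet N) := by
  intro p hp q hq hpq
  have hd : p.1 = q.1 := by simpa using hpq
  have hi : p.2 * (N - p.1) = q.2 * (N - p.1) := by
    rw [mul_sub_eq hp, hd, ← mul_sub_eq hq]
  exact Prod.ext hd (mul_right_cancel₀ (sub_pos hp).ne' hi)

theorem mapsTo_toNat_sub :
    MapsTo (fun p : ℤ × ℤ ↦ ((N : ℤ) - p.1).toNat) (solutionSet N)
      ({a | a ∣ N * (N + 1)} ∩ {a | 0 < a ∧ a < N ∧ a < N + 1}) := by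
  intro p hp
  have hpos := sub_pos hp
  have hdvd := sub_dvd hp
  have hd := hp.1
  simp only [mem_inter_iff, mem_ofPred_eq]
  refine ⟨?_, by omega, by omega, by omega⟩
  rw [← Int.natCast_dvd_natCast, Int.toNat_of_nonneg hpos.le]
  exact_mod_cast hdvd

theorem injOn_toNat_sub : InjOn (fun p : ℤ × ℤ ↦ ((N : ℤ) - p.1).toNat) (solutionSet N) :=
  fun p hp q hq hpq ↦ injOn_sub hp hq <| by
    simpa [Int.toNat_of_nonneg (sub_pos hp).le, Int.toNat_of_nonneg (sub_pos hq).le] using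
      congrArg (fun a : ℕ ↦ (a : ℤ)) hpq

end solutionSet

theorem solution_set_card_upper_bound_general (N : ℕ) :
    ({p : ℤ × ℤ | 1 ≤ p.1 ∧ 2 ≤ p.2 ∧ (N : ℤ) * (p.2 - 1) = p.1 * (p.1 + p.2)}).Finite ∧
    ({p : ℤ × ℤ | 1 ≤ p.1 ∧ 2 ≤ p.2 ∧ (N : ℤ) * (p.2 - 1) = p.1 * (p.1 + p.2)}).ncard ≤
      (N.divisors.card - 1) * ((N + 1).divisors.card - 1) := by
  change (solutionSet N).Finite ∧ (solutionSet N).ncard ≤ _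
  set T := N.properDivisors ×ˢ (N + 1).properDivisors
  set f := (fun a : ℕ ↦ (a.gcd N, a.gcd (N + 1))) ∘ fun p : ℤ × ℤ ↦ ((N : ℤ) - p.1).toNat
  have hmaps : MapsTo f (solutionSet N) T :=
    Nat.mapsTo_gcd_pair_properDivisors.comp fun _ hp ↦ (solutionSet.mapsTo_toNat_sub hp).2
  have hinj : InjOn f (solutionSet N) :=
    ((Nat.injOn_gcd_pair_of_coprime (Nat.coprime_self_add_right.2 (Nat.coprime_one_right N))).comp
      solutionSet.injOn_toNat_sub) fun _ hp ↦ (solutionSet.mapsTo_toNat_sub hp).1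
  refine ⟨Set.Finite.of_injOn hmaps hinj T.finite_toSet, ?_⟩
  calc (solutionSet N).ncard ≤ (T : Set (ℕ × ℕ)).ncard :=
        Set.ncard_le_ncard_of_injOn f hmaps hinj T.finite_toSet
    _ = (N.divisors.card - 1) * ((N + 1).divisors.card - 1) := by
        rw [ncard_coe_finset, card_product, Nat.card_properDivisors, Nat.card_properDivisors]

/-- For every integer `N ≥ 2`, the cardinality `D(N)` of
`S(N) = {(d,i) : d ≥ 1, i ≥ 2, N(i−1) = d(d+i)}` satisfies
`D(N) ≤ (σ₀(N) − 1)(σ₀(N+1) − 1)`, where `σ₀(n)` is the number of positive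
divisors of `n`. -/
theorem solution_set_card_upper_bound (N : ℕ) (hN : 2 ≤ N) :
    ({p : ℤ × ℤ | 1 ≤ p.1 ∧ 2 ≤ p.2 ∧ (N : ℤ) * (p.2 - 1) = p.1 * (p.1 + p.2)}).Finite ∧
    ({p : ℤ × ℤ | 1 ≤ p.1 ∧ 2 ≤ p.2 ∧ (N : ℤ) * (p.2 - 1) = p.1 * (p.1 + p.2)}).ncard ≤
      (N.divisors.card - 1) * ((N + 1).divisors.card - 1) :=
  solution_set_card_upper_bound_general N
end

section
/- Let N, d, i be real numbers with N(i − 1) = d(d + i). Let α be a real number such that α ≠ 0, α + 1 ≠ 0, N/α − (d+i) ≠ 0, N/(α+1) − d ≠ 0, and such that u := N/(N/α − (d+i)) − d ≠ 0 and v := N/(N/(α+1) − d) − (d+i) ≠ 0. Then N/u = N/v − 1. -/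
/-!
Put `A = N - α(d+i)`, `B = N - (α+1)d` and `c = αi - d`. After clearing denominators, the
relation `N(i-1) = d(d+i)` gives both second iterates the same numerator:
`u = Nc/A` and `v = Nc/B`. Hence `N/u = A/c` and `N/v = B/c`, and `B - A = c`.
-/

theorem div_div_sub_sub_eq {K : Type*} [Field K] {N x : K} (k l : K) (hx : x ≠ 0)
    (hA : N - x * k ≠ 0) :
    N / (N / x - k) - l = (N * x - (N - x * k) * l) / (N - x * k) := by
  rw [div_sub' hx, div_div_eq_mul_div, div_sub' hA]

theorem matching_identity_general (N d i α : ℝ) (h : N * (i - 1) = d * (d + i))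
    (hα : α ≠ 0) (hα1 : α + 1 ≠ 0)
    (h1 : N / α - (d + i) ≠ 0) (h2 : N / (α + 1) - d ≠ 0)
    (hu : N / (N / α - (d + i)) - d ≠ 0) :
    N / (N / (N / α - (d + i)) - d) = N / (N / (N / (α + 1) - d) - (d + i)) - 1 := by
  have hA : N - α * (d + i) ≠ 0 := by
    rw [div_sub' hα] at h1
    exact left_ne_zero_of_mul h1
  have hB : N - (α + 1) * d ≠ 0 := by
    rw [div_sub' hα1] at h2
    exact left_ne_zero_of_mul h2
  have hu_eq : N / (N / α - (d + i)) - d = N * (α * i - d) / (N - α * (d + i)) := by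
    rw [div_div_sub_sub_eq _ _ hα hA]
    congr 1
    linear_combination (-α) * h
  have hv_eq : N / (N / (α + 1) - d) - (d + i) = N * (α * i - d) / (N - (α + 1) * d) := by
    rw [div_div_sub_sub_eq _ _ hα1 hB]
    congr 1
    linear_combination (-(α + 1)) * h
  rw [hu_eq] at hu
  obtain ⟨hN, hc⟩ := mul_ne_zero_iff.mp (left_ne_zero_of_mul hu)
  rw [hu_eq, hv_eq]
  field_simp
  ring

/-- The key algebraic identity behind matching in 3 steps: if `N(i−1) = d(d+i)`
and `u = N/(N/α − (d+i)) − d`, `v = N/(N/(α+1) − d) − (d+i)` (with all relevant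
quantities nonzero), then `N/u = N/v − 1`. -/
theorem matching_identity (N d i α : ℝ) (h : N * (i - 1) = d * (d + i))
    (hα : α ≠ 0) (hα1 : α + 1 ≠ 0)
    (h1 : N / α - (d + i) ≠ 0) (h2 : N / (α + 1) - d ≠ 0)
    (hu : N / (N / α - (d + i)) - d ≠ 0)
    (hv : N / (N / (α + 1) - d) - (d + i) ≠ 0) :
    N / (N / (N / α - (d + i)) - d) = N / (N / (N / (α + 1) - d) - (d + i)) - 1 :=
  matching_identity_general N d i α h hα hα1 h1 h2 hu
end

section
/- Let N ≥ 2 be an integer and let d ≥ 1, i ≥ 2 be integers with N(i − 1) = d(d + i). Let α be a real number with α > 0 such that ⌊N/α − α⌋ = d + i, ⌊N/(α+1) − α⌋ = d, and such that N/(d+1+α) < N/α − (d+i) < α + 1 and α < N/(α+1) − d < N/(d+i+α). Define T(x) = N/x − ⌊N/x − α⌋. Then there exists an integer k with d ≤ k ≤ d+i−1 such that ⌊N/T²(α) − α⌋ = k and ⌊N/T²(α+1) − α⌋ = k + 1, and moreover T³(α) = T³(α+1). -/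
/-- The `N`-expansion map with parameter `α`: `T(x) = N/x − ⌊N/x − α⌋`. -/
noncomputable def NExpMap (N : ℕ) (α : ℝ) (x : ℝ) : ℝ :=
  (N : ℝ) / x - ⌊(N : ℝ) / x - α⌋

/-
Write `A = T(α) = N/α − (d+i)` and `B = T(α+1) = N/(α+1) − d`. The interiority hypotheses say
that `T²(α) = N/A − d` and `T²(α+1) = N/B − (d+i)` lie in the open interval `(α, α+1)`, and the
relation `N(i−1) = d(d+i)` gives `N/T²(α+1) = N/T²(α) + 1`. Two points whose images under
`x ↦ N/x` differ by exactly `1` have consecutive digits and the same image under `T`; since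
`T²(α)` and `T²(α+1)` lie between `α` and `α+1`, their digits lie between `d` and `d+i`.
-/

open Set

namespace NExpMap

theorem eq_add_fract (N : ℕ) (α x : ℝ) : NExpMap N α x = α + Int.fract ((N : ℝ) / x - α) := by
  rw [NExpMap, Int.fract]
  ring

theorem eq_sub_of_floor_eq {N : ℕ} {α x : ℝ} {k : ℤ} (h : ⌊(N : ℝ) / x - α⌋ = k) :
    NExpMap N α x = N / x - k := by
  rw [NExpMap, h]

theorem eq_sub_of_mem_Ioo {N : ℕ} {α x : ℝ} {k : ℤ} (h : (N : ℝ) / x - k ∈ Ioo α (α + 1)) :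
    NExpMap N α x = N / x - k :=
  eq_sub_of_floor_eq (Int.floor_eq_iff.2 ⟨by linarith [h.1], by linarith [h.2]⟩)

theorem floor_eq_add_one_of_div_eq_add_one {N : ℕ} {α x y : ℝ} (h : (N : ℝ) / y = N / x + 1) :
    ⌊(N : ℝ) / y - α⌋ = ⌊(N : ℝ) / x - α⌋ + 1 := by
  rw [h, add_sub_right_comm, Int.floor_add_one]

theorem eq_of_div_eq_add_one {N : ℕ} {α x y : ℝ} (h : (N : ℝ) / y = N / x + 1) :
    NExpMap N α y = NExpMap N α x := by
  rw [eq_add_fract, eq_add_fract, h, add_sub_right_comm, Int.fract_add_one]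

theorem antitoneOn_floor_div_sub (N : ℕ) (α : ℝ) :
    AntitoneOn (fun x : ℝ => ⌊(N : ℝ) / x - α⌋) (Ioi 0) := fun _ hx _ _ hxy =>
  Int.floor_mono (sub_le_sub_right (div_le_div_of_nonneg_left (Nat.cast_nonneg N) hx hxy) α)

end NExpMap

section SecondIterate

variable {N α c e : ℝ}

theorem div_div_sub_sub_mem_Ioo_left (hN : 0 < N) (hα : 0 < α) (hc : 0 ≤ c)
    (h1 : N / (c + 1 + α) < N / α - e) (h2 : N / α - e < α + 1) (h3 : α < N / (α + 1) - c) :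
    N / (N / α - e) - c ∈ Ioo α (α + 1) := by
  have hA : 0 < N / α - e := (div_pos hN (by positivity)).trans h1
  have hlo : N / (α + 1) < N / (N / α - e) := div_lt_div_of_pos_left hN hA h2
  have hhi : N / (N / α - e) < c + 1 + α := (div_lt_comm₀ (by positivity) hA).1 h1
  constructor <;> linarith

theorem div_div_sub_sub_mem_Ioo_right (hN : 0 < N) (hα : 0 < α) (he : 0 ≤ e)
    (h2 : N / α - e < α + 1) (h3 : α < N / (α + 1) - c) (h4 : N / (α + 1) - c < N / (e + α)) :
    N / (N / (α + 1) - c) - e ∈ Ioo α (α + 1) := by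
  have hB : 0 < N / (α + 1) - c := hα.trans h3
  have hlo : e + α < N / (N / (α + 1) - c) := (lt_div_comm₀ hB (by positivity)).1 h4
  have hhi : N / (N / (α + 1) - c) < N / α := div_lt_div_of_pos_left hN hα h3
  constructor <;> linarith

end SecondIterate

theorem matching_identity_s8 {K : Type*} [Field K] {N a d i : K} (hN : N ≠ 0)
    (hNdi : N * (i - 1) = d * (d + i)) (ha : a ≠ 0) (ha1 : a + 1 ≠ 0)
    (hA : N / a - (d + i) ≠ 0) (hB : N / (a + 1) - d ≠ 0) (hu : N / (N / a - (d + i)) - d ≠ 0) :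
    N / (N / (N / (a + 1) - d) - (d + i)) = N / (N / (N / a - (d + i)) - d) + 1 := by
  rw [div_sub' ha] at hA
  rw [div_sub' ha1] at hB
  replace hA := (div_ne_zero_iff.1 hA).1
  replace hB := (div_ne_zero_iff.1 hB).1
  have hu_eq : N / (N / a - (d + i)) - d = N * (i * a - d) / (N - a * (d + i)) := by
    rw [div_sub' ha, div_div_eq_mul_div, div_sub' hA]
    congr 1
    linear_combination (-a) * hNdi
  have hv_eq : N / (N / (a + 1) - d) - (d + i) = N * (i * a - d) / (N - (a + 1) * d) := by
    rw [div_sub' ha1, div_div_eq_mul_div, div_sub' hB]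
    congr 1
    linear_combination (-(a + 1)) * hNdi
  have hia : i * a - d ≠ 0 := right_ne_zero_of_mul (div_ne_zero_iff.1 (hu_eq ▸ hu)).1
  rw [hu_eq, hv_eq]
  field_simp
  ring

open NExpMap in
theorem matching_in_three_steps_general (N : ℕ) (hN : 2 ≤ N) (d i : ℕ)
    (hi : 2 ≤ i) (hNdi : N * (i - 1) = d * (d + i))
    (α : ℝ) (hα : 0 < α)
    (hdig1 : ⌊(N : ℝ) / α - α⌋ = (d : ℤ) + i)
    (hdig2 : ⌊(N : ℝ) / (α + 1) - α⌋ = (d : ℤ))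
    (h1 : (N : ℝ) / (d + 1 + α) < (N : ℝ) / α - (d + i))
    (h2 : (N : ℝ) / α - (d + i) < α + 1)
    (h3 : α < (N : ℝ) / (α + 1) - d)
    (h4 : (N : ℝ) / (α + 1) - d < (N : ℝ) / (d + i + α)) :
    ∃ k : ℤ, (d : ℤ) ≤ k ∧ k ≤ (d : ℤ) + i - 1 ∧
      ⌊(N : ℝ) / (NExpMap N α (NExpMap N α α)) - α⌋ = k ∧
      ⌊(N : ℝ) / (NExpMap N α (NExpMap N α (α + 1))) - α⌋ = k + 1 ∧
      NExpMap N α (NExpMap N α (NExpMap N α α)) =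
        NExpMap N α (NExpMap N α (NExpMap N α (α + 1))) := by
  have hN0 : (0 : ℝ) < N := by positivity
  have hNdi' : (N : ℝ) * (i - 1) = d * (d + i) := by
    rw [← Nat.cast_one, ← Nat.cast_sub (by omega)]
    exact_mod_cast hNdi
  have hu := div_div_sub_sub_mem_Ioo_left hN0 hα d.cast_nonneg h1 h2 h3
  have hv := div_div_sub_sub_mem_Ioo_right hN0 hα (by positivity) h2 h3 h4
  set A := (N : ℝ) / α - (d + i)
  set B := (N : ℝ) / (α + 1) - d
  set u := (N : ℝ) / A - d
  set v := (N : ℝ) / B - (d + i)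
  have hTα : NExpMap N α α = A := by
    rw [eq_sub_of_floor_eq hdig1]
    push_cast
    ring
  have hTα1 : NExpMap N α (α + 1) = B := eq_sub_of_floor_eq hdig2
  have hTA : NExpMap N α A = u := by simpa using eq_sub_of_mem_Ioo (k := d) (by simpa using hu)
  have hTB : NExpMap N α B = v := by simpa using eq_sub_of_mem_Ioo (k := d + i) (by simpa using hv)
  have key : N / v = N / u + 1 := matching_identity_s8 hN0.ne' hNdi' hα.ne' (by positivity)
    ((div_pos hN0 (by positivity)).trans h1).ne' (hα.trans h3).ne' (hα.trans hu.1).ne'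
  have hfloor := floor_eq_add_one_of_div_eq_add_one (α := α) key
  refine ⟨⌊N / u - α⌋, ?_, ?_, by rw [hTα, hTA], by rw [hTα1, hTB, hfloor],
    by rw [hTα, hTA, hTα1, hTB, eq_of_div_eq_add_one key]⟩
  · calc (d : ℤ) = ⌊N / (α + 1) - α⌋ := hdig2.symm
      _ ≤ ⌊N / u - α⌋ :=
        antitoneOn_floor_div_sub N α (hα.trans hu.1) (by simp only [mem_Ioi]; positivity) hu.2.le
  · have hv_le : ⌊N / v - α⌋ ≤ ⌊N / α - α⌋ :=
      antitoneOn_floor_div_sub N α hα (hα.trans hv.1) hv.1.le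
    rw [hfloor, hdig1] at hv_le
    omega

/-- Matching in 3 steps: let `N ≥ 2`, `d ≥ 1`, `i ≥ 2` with `N(i−1) = d(d+i)`,
and let `α > 0` have digit set `{d, …, d+i}` with `T(α)` in the interior of the
cylinder `I_d` and `T(α+1)` in the interior of `I_{d+i}`. Then there is a digit
`k` with `d ≤ k ≤ d+i−1` such that `T²(α) ∈ I_k`, `T²(α+1) ∈ I_{k+1}`, and
`T³(α) = T³(α+1)`. -/
theorem matching_in_three_steps (N : ℕ) (hN : 2 ≤ N) (d i : ℕ)
    (hd : 1 ≤ d) (hi : 2 ≤ i) (hNdi : N * (i - 1) = d * (d + i))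
    (α : ℝ) (hα : 0 < α)
    (hdig1 : ⌊(N : ℝ) / α - α⌋ = (d : ℤ) + i)
    (hdig2 : ⌊(N : ℝ) / (α + 1) - α⌋ = (d : ℤ))
    (h1 : (N : ℝ) / (d + 1 + α) < (N : ℝ) / α - (d + i))
    (h2 : (N : ℝ) / α - (d + i) < α + 1)
    (h3 : α < (N : ℝ) / (α + 1) - d)
    (h4 : (N : ℝ) / (α + 1) - d < (N : ℝ) / (d + i + α)) :
    ∃ k : ℤ, (d : ℤ) ≤ k ∧ k ≤ (d : ℤ) + i - 1 ∧
      ⌊(N : ℝ) / (NExpMap N α (NExpMap N α α)) - α⌋ = k ∧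
      ⌊(N : ℝ) / (NExpMap N α (NExpMap N α (α + 1))) - α⌋ = k + 1 ∧
      NExpMap N α (NExpMap N α (NExpMap N α α)) =
        NExpMap N α (NExpMap N α (NExpMap N α (α + 1))) :=
  matching_in_three_steps_general N hN d i hi hNdi α hα hdig1 hdig2 h1 h2 h3 h4
end

section
/- Let N ≥ 2 be an integer and let d ≥ 1, i ≥ 2 be integers with N(i − 1) = d(d + i). Set S₁ = (d+i+1)² + 4N, S₂ = (d−1)² + 4N, and define A = (−(d+i+1)+√S₁)/2, B = (−(d+1)+√S₂)/2, C = N(−(d+i−1)+√S₁)/(2(d+i+N)), D = N(−(d+1)+√S₂)/(2(N−d)), E = (−(d+i−1)+√S₁)/2, F = (−(d−1)+√S₂)/2. Then E = A + 1, F = B + 1, the eight relations A = N/(d+i+E), B = N/(d+i+D), C = N/(d+i+A), C = N/(d+i−1+E), D = N/(d+1+B), D = N/(d+F), E = N/(d+C), F = N/(d+B) all hold, and 0 < A < B < C < D < E < F. -/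
set_option maxHeartbeats 1000000


/-- The heights `A < B < C < D < E < F` of the planar natural extension domain
`Ω_α` for `α ∈ X_{N,d,i}`, with `N(i−1) = d(d+i)`: explicit formulas, the
relations `E = A + 1`, `F = B + 1`, the eight lamination relations, and the
ordering `0 < A < B < C < D < E < F`. -/
theorem natural_extension_heights (N : ℕ) (hN : 2 ≤ N) (d i : ℕ)
    (hd : 1 ≤ d) (hi : 2 ≤ i) (hNdi : N * (i - 1) = d * (d + i))
    (S₁ S₂ A B C D E F : ℝ)
    (hS₁ : S₁ = ((d : ℝ) + i + 1) ^ 2 + 4 * N)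
    (hS₂ : S₂ = ((d : ℝ) - 1) ^ 2 + 4 * N)
    (hA : A = (-((d : ℝ) + i + 1) + Real.sqrt S₁) / 2)
    (hB : B = (-((d : ℝ) + 1) + Real.sqrt S₂) / 2)
    (hC : C = (N : ℝ) * (-((d : ℝ) + i - 1) + Real.sqrt S₁) / (2 * ((d : ℝ) + i + N)))
    (hD : D = (N : ℝ) * (-((d : ℝ) + 1) + Real.sqrt S₂) / (2 * ((N : ℝ) - d)))
    (hE : E = (-((d : ℝ) + i - 1) + Real.sqrt S₁) / 2)
    (hF : F = (-((d : ℝ) - 1) + Real.sqrt S₂) / 2) :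
    E = A + 1 ∧ F = B + 1 ∧
    A = (N : ℝ) / ((d : ℝ) + i + E) ∧
    B = (N : ℝ) / ((d : ℝ) + i + D) ∧
    C = (N : ℝ) / ((d : ℝ) + i + A) ∧
    C = (N : ℝ) / ((d : ℝ) + i - 1 + E) ∧
    D = (N : ℝ) / ((d : ℝ) + 1 + B) ∧
    D = (N : ℝ) / ((d : ℝ) + F) ∧
    E = (N : ℝ) / ((d : ℝ) + C) ∧
    F = (N : ℝ) / ((d : ℝ) + B) ∧
    0 < A ∧ A < B ∧ B < C ∧ C < D ∧ D < E ∧ E < F := by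
  -- basic cast facts
  have hd1 : (1 : ℝ) ≤ (d : ℝ) := by exact_mod_cast hd
  have hi2 : (2 : ℝ) ≤ (i : ℝ) := by exact_mod_cast hi
  have hN2 : (2 : ℝ) ≤ (N : ℝ) := by exact_mod_cast hN
  have hkey : (N : ℝ) * ((i : ℝ) - 1) = (d : ℝ) * ((d : ℝ) + (i : ℝ)) := by
    have h : ((N * (i - 1) : ℕ) : ℝ) = ((d * (d + i) : ℕ) : ℝ) := by exact_mod_cast Nat.cast_inj.mpr hNdi
    push_cast [Nat.cast_sub (by omega : 1 ≤ i)] at h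
    linarith
  have hdN : (d : ℝ) < (N : ℝ) := by nlinarith
  -- square root facts
  set s1 := Real.sqrt S₁ with hs1def
  set s2 := Real.sqrt S₂ with hs2def
  have hS₁nn : 0 ≤ S₁ := by rw [hS₁]; positivity
  have hS₂nn : 0 ≤ S₂ := by rw [hS₂]; positivity
  have hs1 : s1 ^ 2 = ((d : ℝ) + i + 1) ^ 2 + 4 * N := by
    rw [hs1def, Real.sq_sqrt hS₁nn, hS₁]
  have hs2 : s2 ^ 2 = ((d : ℝ) - 1) ^ 2 + 4 * N := by
    rw [hs2def, Real.sq_sqrt hS₂nn, hS₂]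
  have hs1gt : (d : ℝ) + i + 1 < s1 := by
    rw [hs1def]
    rw [show S₁ = ((d:ℝ)+i+1)^2 + 4*N from hS₁]
    nlinarith [Real.sq_sqrt (show (0:ℝ) ≤ ((d:ℝ)+i+1)^2 + 4*N by positivity),
      Real.sqrt_nonneg (((d:ℝ)+i+1)^2 + 4*N)]
  have hs2gt : (d : ℝ) + 1 < s2 := by
    rw [hs2def, hS₂]
    nlinarith [Real.sq_sqrt (show (0:ℝ) ≤ ((d:ℝ)-1)^2 + 4*N by positivity),
      Real.sqrt_nonneg (((d:ℝ)-1)^2 + 4*N)]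
  have hs1pos : 0 < s1 := by linarith
  have hs2pos : 0 < s2 := by linarith
  have hs21 : s2 < s1 := by nlinarith [hs1, hs2, hs1pos, hs2pos, hi2, hd1]
  -- the key quantitative fact:  i*s2 > d*i + i + 2*d
  have hq : ((i : ℝ) - 1) * (((i : ℝ) * s2) ^ 2 - ((d : ℝ) * i + i + 2 * d) ^ 2)
      = 4 * (d : ℝ) * ((d : ℝ) + i) := by
    linear_combination (((i:ℝ) - 1) * (i:ℝ)^2) * hs2 + (4 * (i:ℝ)^2) * hkey
  have key2 : (d : ℝ) * i + i + 2 * d < (i : ℝ) * s2 := by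
    nlinarith [hq, mul_pos (show (0:ℝ) < (i:ℝ) by linarith) hs2pos]
  have hdiff : s1 - s2 < i := by
    nlinarith [key2, hs1, hs2, hs1pos, hs2pos]
  -- positivity of the six heights
  have hApos : 0 < A := by rw [hA]; linarith
  have hBpos : 0 < B := by rw [hB]; linarith
  have hE1 : E = A + 1 := by rw [hE, hA]; ring
  have hF1 : F = B + 1 := by rw [hF, hB]; ring
  have hNpos : (0 : ℝ) < (N : ℝ) := by linarith
  -- quadratic relations
  have hA2 : A * (A + ((d : ℝ) + i + 1)) = N := by
    rw [hA]; linear_combination (1/4 : ℝ) * hs1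
  have hB2 : B * (B + ((d : ℝ) + 1)) = (N : ℝ) - d := by
    rw [hB]; linear_combination (1/4 : ℝ) * hs2
  -- C, D as quotients
  have hdenA : (0 : ℝ) < (d : ℝ) + i + A := by linarith
  have hdenB : (0 : ℝ) < (d : ℝ) + 1 + B := by linarith
  have hCdef : C = (N : ℝ) / ((d : ℝ) + i + A) := by
    rw [hC, hA, div_eq_div_iff (show (2*((d:ℝ)+i+N)) ≠ 0 from ne_of_gt (by linarith)) (show (d:ℝ) + i + (-((d:ℝ)+i+1)+s1)/2 ≠ 0 from ne_of_gt (by linarith))]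
    linear_combination ((N : ℝ)/2) * hs1
  have hDdef : D = (N : ℝ) / ((d : ℝ) + 1 + B) := by
    rw [hD, hB, div_eq_div_iff (show (2*((N:ℝ)-d)) ≠ 0 from ne_of_gt (by linarith)) (show (d:ℝ) + 1 + (-((d:ℝ)+1)+s2)/2 ≠ 0 from ne_of_gt (by linarith))]
    linear_combination ((N : ℝ)/2) * hs2
  have hCpos : 0 < C := by rw [hCdef]; positivity
  have hDpos : 0 < D := by rw [hDdef]; positivity
  have hEpos : 0 < E := by rw [hE1]; linarith
  have hFpos : 0 < F := by rw [hF1]; linarith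
  -- the eight relations
  have e3 : A = (N : ℝ) / ((d : ℝ) + i + E) := by
    rw [hE1, eq_div_iff (by linarith : ((d : ℝ) + i + (A + 1)) ≠ 0)]
    linear_combination hA2
  have e4 : B = (N : ℝ) / ((d : ℝ) + i + D) := by
    rw [hDdef, eq_div_iff (by positivity : ((d : ℝ) + i + (N : ℝ) / ((d : ℝ) + 1 + B)) ≠ 0)]
    field_simp
    linear_combination ((d : ℝ) + i) * hB2 + hkey
  have e5 : C = (N : ℝ) / ((d : ℝ) + i + A) := hCdef
  have e6 : C = (N : ℝ) / ((d : ℝ) + i - 1 + E) := by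
    rw [hCdef, hE1]; ring_nf
  have e7 : D = (N : ℝ) / ((d : ℝ) + 1 + B) := hDdef
  have e8 : D = (N : ℝ) / ((d : ℝ) + F) := by
    rw [hDdef, hF1]; ring_nf
  have e9 : E = (N : ℝ) / ((d : ℝ) + C) := by
    rw [hCdef, hE1, eq_div_iff (by positivity : ((d : ℝ) + (N : ℝ) / ((d : ℝ) + i + A)) ≠ 0)]
    field_simp
    linear_combination (d : ℝ) * hA2 - hkey
  have e10 : F = (N : ℝ) / ((d : ℝ) + B) := by
    rw [hF1, eq_div_iff (by linarith : ((d : ℝ) + B) ≠ 0)]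
    linear_combination hB2
  -- ordering
  have hAB : A < B := by rw [hA, hB]; linarith
  have hBAi : B - A < (i : ℝ) := by rw [hA, hB]; linarith
  have hBAi1 : B - A < (i : ℝ) - 1 := by rw [hA, hB]; linarith
  have hAD : A < D := by
    rw [e3, hDdef, hE1]
    apply div_lt_div_of_pos_left hNpos hdenB
    linarith
  have hBC : B < C := by
    rw [e4, hCdef]
    apply div_lt_div_of_pos_left hNpos hdenA
    linarith
  have hCD : C < D := by
    rw [hCdef, hDdef]
    apply div_lt_div_of_pos_left hNpos hdenB
    linarith
  have hCF : C < F := by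
    rw [hCdef, e10]
    apply div_lt_div_of_pos_left hNpos (by linarith : (0:ℝ) < (d:ℝ) + B)
    linarith
  have hDE : D < E := by
    rw [e8, e9]
    apply div_lt_div_of_pos_left hNpos (by linarith : (0:ℝ) < (d:ℝ) + C)
    linarith
  have hEF : E < F := by rw [hE1, hF1]; linarith
  exact ⟨hE1, hF1, e3, e4, e5, e6, e7, e8, e9, e10, hApos, hAB, hBC, hCD, hDE, hEF⟩
end

section
/- Let N ≥ 2 be an integer and let d ≥ 1, i ≥ 2 be integers with N(i − 1) = d(d + i). Define A = (−(d+i+1)+√((d+i+1)²+4N))/2 and B = (−(d+1)+√((d−1)²+4N))/2. Then the set X = {α ∈ ℝ : 0 < α, N/(d+1+α) < N/α − (d+i), N/α − (d+i) < α + 1, α < N/(α+1) − d, N/(α+1) − d < N/(d+i+α)} equals the open interval (A, B). -/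
/-- Root comparison: the positive root of `x^2 + p x - q` is below `α`. -/
lemma root_lt_iff {p q α : ℝ} (hs : 0 ≤ p ^ 2 + 4 * q) (hα : 0 < 2 * α + p) :
    (-p + Real.sqrt (p ^ 2 + 4 * q)) / 2 < α ↔ q < α ^ 2 + p * α := by
  have hsq := Real.sq_sqrt hs
  have hnn := Real.sqrt_nonneg (p ^ 2 + 4 * q)
  constructor
  · intro h
    have h' : Real.sqrt (p ^ 2 + 4 * q) < 2 * α + p := by linarith
    nlinarith
  · intro h
    have h' : Real.sqrt (p ^ 2 + 4 * q) < 2 * α + p := by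
      apply (Real.sqrt_lt' hα).mpr
      nlinarith
    linarith

lemma lt_root_iff {p q α : ℝ} (hs : 0 ≤ p ^ 2 + 4 * q) (hα : 0 ≤ 2 * α + p) :
    α < (-p + Real.sqrt (p ^ 2 + 4 * q)) / 2 ↔ α ^ 2 + p * α < q := by
  have hsq := Real.sq_sqrt hs
  have hnn := Real.sqrt_nonneg (p ^ 2 + 4 * q)
  constructor
  · intro h
    have h' : 2 * α + p < Real.sqrt (p ^ 2 + 4 * q) := by linarith
    nlinarith
  · intro h
    have h' : 2 * α + p < Real.sqrt (p ^ 2 + 4 * q) := by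
      by_contra hcon
      push_neg at hcon
      nlinarith
    linarith

set_option maxHeartbeats 1600000 in
/-- The matching set `X_{N,d,i}`, characterised by the inequalities
`N/(d+1+α) < N/α − (d+i) < α+1` and `α < N/(α+1) − d < N/(d+i+α)`, equals the
open interval `(A, B)` with the endpoints `A`, `B` given explicitly. -/
theorem matching_set_is_interval (N : ℕ) (hN : 2 ≤ N) (d i : ℕ)
    (hd : 1 ≤ d) (hi : 2 ≤ i) (hNdi : N * (i - 1) = d * (d + i))
    (A B : ℝ)
    (hA : A = (-((d : ℝ) + i + 1) + Real.sqrt (((d : ℝ) + i + 1) ^ 2 + 4 * N)) / 2)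
    (hB : B = (-((d : ℝ) + 1) + Real.sqrt (((d : ℝ) - 1) ^ 2 + 4 * N)) / 2) :
    {α : ℝ | 0 < α ∧
      (N : ℝ) / ((d : ℝ) + 1 + α) < (N : ℝ) / α - ((d : ℝ) + i) ∧
      (N : ℝ) / α - ((d : ℝ) + i) < α + 1 ∧
      α < (N : ℝ) / (α + 1) - d ∧
      (N : ℝ) / (α + 1) - d < (N : ℝ) / ((d : ℝ) + i + α)} = Set.Ioo A B := by
  have hNr : (2 : ℝ) ≤ (N : ℝ) := by exact_mod_cast hN
  have hdr : (1 : ℝ) ≤ (d : ℝ) := by exact_mod_cast hd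
  have hir : (2 : ℝ) ≤ (i : ℝ) := by exact_mod_cast hi
  have hkey : (N : ℝ) * ((i : ℝ) - 1) = (d : ℝ) * ((d : ℝ) + (i : ℝ)) := by
    have h1 : ((N * (i - 1) : ℕ) : ℝ) = ((d * (d + i) : ℕ) : ℝ) := by exact_mod_cast hNdi
    push_cast [Nat.cast_sub (by omega : 1 ≤ i)] at h1
    linarith
  have hA' : A = (-((d : ℝ) + i + 1) +
      Real.sqrt (((d : ℝ) + i + 1) ^ 2 + 4 * (N : ℝ))) / 2 := hA
  have hB' : B = (-((d : ℝ) + 1) +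
      Real.sqrt (((d : ℝ) + 1) ^ 2 + 4 * ((N : ℝ) - d))) / 2 := by
    rw [hB]
    congr 2
    ring
  have hsA : (0 : ℝ) ≤ ((d : ℝ) + i + 1) ^ 2 + 4 * (N : ℝ) := by positivity
  have hsB : (0 : ℝ) ≤ ((d : ℝ) + 1) ^ 2 + 4 * ((N : ℝ) - d) := by nlinarith
  ext α
  simp only [Set.mem_setOf_eq, Set.mem_Ioo]
  constructor
  · rintro ⟨h0, h1, h2, h3, h4⟩
    have hα1 : (0 : ℝ) < α + 1 := by linarith
    constructor
    · rw [hA', root_lt_iff hsA (by linarith)]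
      have h2' : (N : ℝ) / α < α + 1 + ((d : ℝ) + i) := by linarith
      rw [div_lt_iff₀ h0] at h2'
      nlinarith
    · rw [hB', lt_root_iff hsB (by linarith)]
      have h3' : α + (d : ℝ) < (N : ℝ) / (α + 1) := by linarith
      rw [lt_div_iff₀ hα1] at h3'
      nlinarith
  · rintro ⟨hAα, hαB⟩
    have hA0 : (0 : ℝ) < A := by
      rw [hA']
      exact (lt_root_iff hsA (by linarith)).mpr (by nlinarith)
    have h0 : 0 < α := lt_trans hA0 hAα
    have hα1 : (0 : ℝ) < α + 1 := by linarith
    have hd1α : (0 : ℝ) < (d : ℝ) + 1 + α := by linarith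
    have hdiα : (0 : ℝ) < (d : ℝ) + i + α := by linarith
    -- quadratic inequalities
    have hA2 : (-((d : ℝ) + i + 1) +
        Real.sqrt (((d : ℝ) + i + 1) ^ 2 + 4 * (N : ℝ))) / 2 < α := by
      rw [← hA']; exact hAα
    have haux1 : (0 : ℝ) < 2 * α + ((d : ℝ) + i + 1) := by linarith
    have hq1 : (N : ℝ) < α ^ 2 + ((d : ℝ) + i + 1) * α :=
      (root_lt_iff (p := (d : ℝ) + i + 1) (q := (N : ℝ)) (α := α) hsA haux1).mp hA2
    have hB2 : α < (-((d : ℝ) + 1) +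
        Real.sqrt (((d : ℝ) + 1) ^ 2 + 4 * ((N : ℝ) - d))) / 2 := by
      rw [← hB']; exact hαB
    have haux : (0 : ℝ) ≤ 2 * α + ((d : ℝ) + 1) := by linarith
    have hq2 : α ^ 2 + ((d : ℝ) + 1) * α < (N : ℝ) - d :=
      (lt_root_iff (p := (d : ℝ) + 1) (q := (N : ℝ) - d) (α := α) hsB haux).mp hB2
    refine ⟨h0, ?_, ?_, ?_, ?_⟩
    · have heq : (N : ℝ) / α - ((d : ℝ) + i) - (N : ℝ) / ((d : ℝ) + 1 + α) =
          ((N : ℝ) * ((d : ℝ) + 1) - ((d : ℝ) + i) * (α ^ 2 + ((d : ℝ) + 1) * α)) /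
            (α * ((d : ℝ) + 1 + α)) := by
        field_simp
        ring
      have hpos : 0 < ((N : ℝ) * ((d : ℝ) + 1) - ((d : ℝ) + i) * (α ^ 2 + ((d : ℝ) + 1) * α)) /
          (α * ((d : ℝ) + 1 + α)) := by
        apply div_pos
        · have hm := mul_lt_mul_of_pos_left hq2 (show (0:ℝ) < (d:ℝ) + i by linarith)
          nlinarith [hm, hkey]
        · positivity
      linarith [heq ▸ hpos]
    · have h2' : (N : ℝ) < (α + 1 + ((d : ℝ) + i)) * α := by nlinarith
      have := (div_lt_iff₀ h0).mpr h2'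
      linarith
    · have h3' : (α + (d : ℝ)) * (α + 1) < (N : ℝ) := by nlinarith
      have := (lt_div_iff₀ hα1).mpr h3'
      linarith
    · have heq : (N : ℝ) / ((d : ℝ) + i + α) - ((N : ℝ) / (α + 1) - d) =
          ((d : ℝ) * (α ^ 2 + ((d : ℝ) + i + 1) * α + ((d : ℝ) + i)) -
            (N : ℝ) * ((d : ℝ) + i - 1)) / ((α + 1) * ((d : ℝ) + i + α)) := by
        field_simp
        ring
      have hpos : 0 < ((d : ℝ) * (α ^ 2 + ((d : ℝ) + i + 1) * α + ((d : ℝ) + i)) -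
          (N : ℝ) * ((d : ℝ) + i - 1)) / ((α + 1) * ((d : ℝ) + i + α)) := by
        apply div_pos
        · have hm := mul_lt_mul_of_pos_left hq1 (show (0:ℝ) < (d:ℝ) by linarith)
          nlinarith [hm, hkey]
        · positivity
      linarith [heq ▸ hpos]
end

section
/- Let N ≥ 2 be an integer and let d ≥ 1, i ≥ 2 be integers with N(i − 1) = d(d + i), and let A = (−(d+i+1)+√((d+i+1)²+4N))/2. Then N/A − (d+i) = 1 + A (so T_A(A) = A + 1) and N/(A+1) − d = N/(A+d+i) (so T_A(A+1) equals the right endpoint of the cylinder with digit d+i). -/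
/-- At the left endpoint `A` of the matching interval `X_{N,d,i}` one has
`T_A(A) = A + 1` and `T_A(A+1)` equals the right endpoint `N/(A+d+i)` of the
cylinder with digit `d+i`. -/
theorem left_endpoint_relations (N : ℕ) (hN : 2 ≤ N) (d i : ℕ)
    (hd : 1 ≤ d) (hi : 2 ≤ i) (hNdi : N * (i - 1) = d * (d + i))
    (A : ℝ)
    (hA : A = (-((d : ℝ) + i + 1) + Real.sqrt (((d : ℝ) + i + 1) ^ 2 + 4 * N)) / 2) :
    (N : ℝ) / A - ((d : ℝ) + i) = 1 + A ∧
    (N : ℝ) / (A + 1) - d = (N : ℝ) / (A + d + i) := by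
  set b : ℝ := (d : ℝ) + i + 1 with hb
  have hdpos : (0:ℝ) ≤ (d:ℝ) := Nat.cast_nonneg d
  have hipos : (0:ℝ) ≤ (i:ℝ) := Nat.cast_nonneg i
  have hbpos : (0:ℝ) < b := by positivity
  have hNpos : (0:ℝ) < (N:ℝ) := by exact_mod_cast Nat.lt_of_lt_of_le Nat.zero_lt_two hN
  have hnn : (0:ℝ) ≤ b ^ 2 + 4 * N := by positivity
  have hsq : Real.sqrt (b ^ 2 + 4 * N) ^ 2 = b ^ 2 + 4 * N := Real.sq_sqrt hnn
  have hslt : b < Real.sqrt (b ^ 2 + 4 * N) := by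
    have : b ^ 2 < b ^ 2 + 4 * N := by linarith
    nlinarith [Real.sqrt_nonneg (b ^ 2 + 4 * N), hsq]
  have hApos : 0 < A := by rw [hA]; linarith
  have hkey : A ^ 2 + b * A = N := by
    rw [hA]; nlinarith [hsq]
  have hC : (N:ℝ) * ((i:ℝ) - 1) = (d:ℝ) * ((d:ℝ) + (i:ℝ)) := by
    have h1 : 1 ≤ i := by omega
    have := hNdi
    have : (↑(N * (i - 1)) : ℝ) = (↑(d * (d + i)) : ℝ) := by exact_mod_cast congrArg Nat.cast this
    push_cast [Nat.cast_sub h1] at this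
    linarith
  have hkey' : A ^ 2 + ((d : ℝ) + i + 1) * A = N := by rw [← hb]; exact hkey
  constructor
  · have hA0 : A ≠ 0 := ne_of_gt hApos
    field_simp
    linear_combination (-1:ℝ) * hkey'
  · have h1 : A + 1 ≠ 0 := by positivity
    have h2 : A + d + i ≠ 0 := by positivity
    field_simp
    linear_combination (-(d:ℝ)) * hkey' + hC
end

section
/- Let N ≥ 2 be an integer, let d ≥ 1 and i ≥ 2 be integers, and let B = (−(d+1)+√((d−1)²+4N))/2. Then B satisfies (d+i)B² + (d+1)(d+i)B − N(d+1) = 0 (equivalently, B = N/(d+i+N/(d+1+B))) if and only if N(i − 1) = d(d + i). -/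
/-- The number `B = (−(d+1)+√((d−1)²+4N))/2` satisfies the quadratic
`(d+i)B² + (d+1)(d+i)B − N(d+1) = 0` (equivalently `B = N/(d+i+N/(d+1+B))`)
if and only if `N(i − 1) = d(d + i)`. -/
theorem right_endpoint_quadratic_iff (N : ℕ) (hN : 2 ≤ N) (d i : ℕ)
    (hd : 1 ≤ d) (hi : 2 ≤ i)
    (B : ℝ)
    (hB : B = (-((d : ℝ) + 1) + Real.sqrt (((d : ℝ) - 1) ^ 2 + 4 * N)) / 2) :
    ((d : ℝ) + i) * B ^ 2 + ((d : ℝ) + 1) * ((d : ℝ) + i) * B - (N : ℝ) * ((d : ℝ) + 1) = 0 ↔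
      (N : ℝ) * ((i : ℝ) - 1) = (d : ℝ) * ((d : ℝ) + i) := by
  have hs : Real.sqrt (((d : ℝ) - 1) ^ 2 + 4 * N) ^ 2 = ((d : ℝ) - 1) ^ 2 + 4 * N :=
    Real.sq_sqrt (by positivity)
  have key : B ^ 2 + ((d : ℝ) + 1) * B + d = N := by
    subst hB; nlinarith [hs]
  constructor <;> intro h <;> nlinarith [key, h]
end

section
/- Let N, d, i be real numbers with d ≠ 0 and N(i − 1) = d(d + i), let A > 0 satisfy A² + (d+i+1)A = N, and set E = A + 1. Assume N − Ed ≠ 0 and E(N − d) + N ≠ 0. Then ((E − d − i)N + Ed(d+i))/(N − Ed) = A and (N² − ENd)/(E(N − d) + N) = A. -/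
/-- For `A > 0` with `A² + (d+i+1)A = N`, `N(i−1) = d(d+i)`, `d ≠ 0`, and
`E = A + 1`, one has `((E−d−i)N + Ed(d+i))/(N − Ed) = A` and
`(N² − ENd)/(E(N−d) + N) = A`. -/
theorem normalizing_term_constant_E (N d i A : ℝ) (hd : d ≠ 0)
    (hNdi : N * (i - 1) = d * (d + i))
    (hA : 0 < A) (hAq : A ^ 2 + (d + i + 1) * A = N)
    (E : ℝ) (hE : E = A + 1)
    (h1 : N - E * d ≠ 0) (h2 : E * (N - d) + N ≠ 0) :
    ((E - d - i) * N + E * d * (d + i)) / (N - E * d) = A ∧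
    (N ^ 2 - E * N * d) / (E * (N - d) + N) = A := by
  subst hE
  constructor
  · rw [div_eq_iff h1]; linear_combination -hNdi + d * hAq
  · rw [div_eq_iff h2]; linear_combination A * hNdi + (d - N) * hAq
end

section
/- Let N ≥ 2 be an integer and let d ≥ 1, i ≥ 2 be integers with N(i − 1) = d(d + i). Set S₁ = (d+i+1)² + 4N, S₂ = (d−1)² + 4N, A = (−(d+i+1)+√S₁)/2, B = (−(d+1)+√S₂)/2, C = N(−(d+i−1)+√S₁)/(2(d+i+N)), D = N(−(d+1)+√S₂)/(2(N−d)), E = A + 1, F = B + 1. Let α ∈ (A, B), and put t₁ = N/(α+1) − d, s₁ = N/α − (d+i), t₂ = N/t₁ − (d+i), s₂ = N/s₁ − d. Then ∫_α^{t₁} D/(N+Dx) dx + ∫_{t₁}^{s₂} E/(N+Ex) dx + ∫_{s₂}^{α+1} F/(N+Fx) dx − ∫_α^{t₂} A/(N+Ax) dx − ∫_{t₂}^{s₁} B/(N+Bx) dx − ∫_{s₁}^{α+1} C/(N+Cx) dx = 2 log A + 2 log(B+1) − log(N − (A+1)d) − log(N − (d+i)B). In particular, this total integral is independent of α ∈ (A,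 B). -/
open intervalIntegral

lemma dN_aux (n dd ii : ℝ) (h : n*(ii-1) = dd*(dd+ii)) (hd1 : 1 ≤ dd) (hi2 : 2 ≤ ii) :
    dd < n := by nlinarith

lemma pos_aux (x u n : ℝ) (hn : 0 < n) (hu : 0 < u) (h1 : n = x*(x+u)) (h2 : 0 ≤ 2*x + u) :
    0 < x := by nlinarith

lemma log_aux_int (n K a b : ℝ) (hn : 0 < n) (hK : 0 < K) (ha : 0 < a) (hb : 0 < b) :
    ∫ x in a..b, K / (n + K * x) = Real.log (n + K * b) - Real.log (n + K * a) := by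
  have hpos : ∀ x ∈ Set.uIcc a b, 0 < n + K * x := by
    intro x hx
    rcases Set.mem_uIcc.mp hx with ⟨h1, _⟩ | ⟨h1, _⟩ <;>
      first
      | nlinarith [mul_pos hK (lt_of_lt_of_le ha h1)]
      | nlinarith [mul_pos hK (lt_of_lt_of_le hb h1)]
  apply intervalIntegral.integral_eq_sub_of_hasDerivAt (f := fun x => Real.log (n + K * x))
  · intro x hx
    have h := (((hasDerivAt_id x).const_mul K).const_add n).log (hpos x hx).ne'
    simpa using h
  · apply ContinuousOn.intervalIntegrable
    exact ContinuousOn.div continuousOn_const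
      ((continuous_const.add (continuous_const.mul continuous_id)).continuousOn)
      (fun x hx => (hpos x hx).ne')

set_option maxHeartbeats 2000000 in
/-- The reciprocal of the normalizing constant of the `T_α`-invariant density is
independent of `α` in the matching interval `(A, B)`: the signed sum of the six
integrals of the pieces of the density equals
`2 log A + 2 log(B+1) − log(N−(A+1)d) − log(N−(d+i)B)`. -/
theorem normalizing_constant_value (N d i : ℕ) (hN : 2 ≤ N)
    (hd : 1 ≤ d) (hi : 2 ≤ i) (hNdi : N * (i - 1) = d * (d + i))
    (S₁ S₂ A B C D E F : ℝ)
    (hS₁ : S₁ = ((d : ℝ) + i + 1) ^ 2 + 4 * N)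
    (hS₂ : S₂ = ((d : ℝ) - 1) ^ 2 + 4 * N)
    (hA : A = (-((d : ℝ) + i + 1) + Real.sqrt S₁) / 2)
    (hB : B = (-((d : ℝ) + 1) + Real.sqrt S₂) / 2)
    (hC : C = (N : ℝ) * (-((d : ℝ) + i - 1) + Real.sqrt S₁) / (2 * ((d : ℝ) + i + N)))
    (hD : D = (N : ℝ) * (-((d : ℝ) + 1) + Real.sqrt S₂) / (2 * ((N : ℝ) - d)))
    (hE : E = A + 1) (hF : F = B + 1)
    (α : ℝ) (hα : α ∈ Set.Ioo A B)
    (t₁ s₁ t₂ s₂ : ℝ)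
    (ht₁ : t₁ = (N : ℝ) / (α + 1) - d)
    (hs₁ : s₁ = (N : ℝ) / α - ((d : ℝ) + i))
    (ht₂ : t₂ = (N : ℝ) / t₁ - ((d : ℝ) + i))
    (hs₂ : s₂ = (N : ℝ) / s₁ - d) :
    (∫ x in α..t₁, D / (N + D * x)) + (∫ x in t₁..s₂, E / (N + E * x)) +
      (∫ x in s₂..(α + 1), F / (N + F * x)) -
      (∫ x in α..t₂, A / (N + A * x)) - (∫ x in t₂..s₁, B / (N + B * x)) -
      (∫ x in s₁..(α + 1), C / (N + C * x)) =
    2 * Real.log A + 2 * Real.log (B + 1) -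
      Real.log ((N : ℝ) - (A + 1) * d) - Real.log ((N : ℝ) - ((d : ℝ) + i) * B) := by
  obtain ⟨hαA, hαB⟩ := hα
  have hn0 : (0:ℝ) < N := by positivity
  have hn2 : (2:ℝ) ≤ N := by exact_mod_cast hN
  have hd1 : (1:ℝ) ≤ d := by exact_mod_cast hd
  have hi2 : (2:ℝ) ≤ i := by exact_mod_cast hi
  have hndi : (N:ℝ) * ((i:ℝ) - 1) = (d:ℝ) * ((d:ℝ) + i) := by
    have h := congrArg (Nat.cast : ℕ → ℝ) hNdi
    push_cast [Nat.cast_sub (by omega : 1 ≤ i)] at h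
    linarith only [h]
  have hdN : (d:ℝ) < N := dN_aux _ _ _ hndi hd1 hi2
  have hS₁0 : (0:ℝ) ≤ S₁ := by rw [hS₁]; positivity
  have hS₂0 : (0:ℝ) ≤ S₂ := by rw [hS₂]; positivity
  have hsq₁ : Real.sqrt S₁ = 2*A + ((d:ℝ)+i+1) := by rw [hA]; ring
  have hsq₂ : Real.sqrt S₂ = 2*B + ((d:ℝ)+1) := by rw [hB]; ring
  have hsn₁ : (0:ℝ) ≤ 2*A + ((d:ℝ)+i+1) := hsq₁ ▸ Real.sqrt_nonneg S₁
  have hsn₂ : (0:ℝ) ≤ 2*B + ((d:ℝ)+1) := hsq₂ ▸ Real.sqrt_nonneg S₂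
  have hsqS₁ : (2*A + ((d:ℝ)+i+1))^2 = S₁ := by rw [← hsq₁]; exact Real.sq_sqrt hS₁0
  have hsqS₂ : (2*B + ((d:ℝ)+1))^2 = S₂ := by rw [← hsq₂]; exact Real.sq_sqrt hS₂0
  have hNA : (N:ℝ) = A*(A+(d:ℝ)+i+1) := by rw [hS₁] at hsqS₁; linear_combination (-1/4)*hsqS₁
  have hNB : (N:ℝ) = (B+1)*(B+(d:ℝ)) := by rw [hS₂] at hsqS₂; linear_combination (-1/4)*hsqS₂
  have hApos : 0 < A :=
    pos_aux A ((d:ℝ)+i+1) (N:ℝ) hn0 (by linarith) (by linear_combination hNA) (by linarith)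
  have hBpos : 0 < B :=
    pos_aux B ((d:ℝ)+1) ((N:ℝ)-d) (by linarith) (by linarith) (by linear_combination hNB)
      (by linarith)
  rw [hsq₁] at hC
  rw [hsq₂] at hD
  have hdi0 : (0:ℝ) < (d:ℝ) + i := by linarith only [hd1, hi2]
  have hM₁ : (0:ℝ) < A + (d:ℝ) + i := by linarith only [hApos, hdi0]
  have hM₂ : (0:ℝ) < B + (d:ℝ) + 1 := by linarith only [hBpos, hd1]
  have hA1 : (0:ℝ) < A + 1 := by linarith only [hApos]
  have hB1 : (0:ℝ) < B + 1 := by linarith only [hBpos]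
  have hdin : (d:ℝ) + i + N = (A+1)*(A+(d:ℝ)+i) := by linear_combination hNA
  have hCval : C = (N:ℝ) / (A + (d:ℝ) + i) := by
    rw [hC, hdin]; field_simp; ring
  have hnd : (N:ℝ) - d = B*(B+(d:ℝ)+1) := by linear_combination hNB
  have hDval : D = (N:ℝ) / (B + (d:ℝ) + 1) := by
    rw [hD, hnd]; field_simp; ring
  have hCpos : 0 < C := by rw [hCval]; exact div_pos hn0 hM₁
  have hDpos : 0 < D := by rw [hDval]; exact div_pos hn0 hM₂
  have key1 : (N:ℝ) = (A+1)*(C+d) := by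
    rw [hCval]; field_simp; linear_combination hndi + (d:ℝ)*hNA
  have key2 : (N:ℝ) = B*(D+(d:ℝ)+i) := by
    rw [hDval]; field_simp; linear_combination -hndi + ((d:ℝ)+i)*hNB
  have key3 : (N:ℝ) = C*(A+(d:ℝ)+i) := by rw [hCval]; field_simp
  have key4 : (N:ℝ) = F*(B+(d:ℝ)) := by rw [hF]; linear_combination hNB
  -- positivity of endpoints
  have hα0 : 0 < α := hApos.trans hαA
  have hα1 : (0:ℝ) < α + 1 := by linarith only [hα0]
  have ht₁B : B < t₁ := by
    have h := div_lt_div_of_pos_left hn0 hα1 (show α + 1 < B + 1 by linarith only [hαB])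
    have hq : (N:ℝ) / (B+1) = B + d := by rw [hNB]; field_simp
    rw [ht₁]; rw [hq] at h; linarith only [h]
  have ht₁C : t₁ < C := by
    have h := div_lt_div_of_pos_left hn0 hA1 (show A + 1 < α + 1 by linarith only [hαA])
    have hq : (N:ℝ) / (A+1) = C + d := by rw [key1]; field_simp
    rw [ht₁]; rw [hq] at h; linarith only [h]
  have ht₁0 : 0 < t₁ := hBpos.trans ht₁B
  have hs₁D : D < s₁ := by
    have h := div_lt_div_of_pos_left hn0 hα0 hαB
    have hq : (N:ℝ) / B = D + ((d:ℝ) + i) := by rw [key2]; field_simp; ring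
    rw [hs₁]; rw [hq] at h; linarith only [h]
  have hs₁E : s₁ < A + 1 := by
    have h := div_lt_div_of_pos_left hn0 hApos hαA
    have hq : (N:ℝ) / A = A + (d:ℝ) + i + 1 := by rw [hNA]; field_simp
    rw [hs₁]; rw [hq] at h; linarith only [h]
  have hs₁0 : 0 < s₁ := hDpos.trans hs₁D
  have ht₂A : A < t₂ := by
    have h := div_lt_div_of_pos_left hn0 ht₁0 ht₁C
    have hq : (N:ℝ) / C = A + (d:ℝ) + i := by rw [hCval]; field_simp
    rw [ht₂]; rw [hq] at h; linarith only [h]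
  have ht₂0 : 0 < t₂ := hApos.trans ht₂A
  have hs₂C : C < s₂ := by
    have h := div_lt_div_of_pos_left hn0 hs₁0 hs₁E
    have hq : (N:ℝ) / (A+1) = C + d := by rw [key1]; field_simp
    rw [hs₂]; rw [hq] at h; linarith only [h]
  have hs₂0 : 0 < s₂ := hCpos.trans hs₂C
  have hEpos : 0 < E := by rw [hE]; linarith only [hApos]
  have hFpos : 0 < F := by rw [hF]; linarith only [hBpos]
  -- the twelve argument identities
  have hu : (0:ℝ) < α + B + (d:ℝ) + 1 := by linarith only [hα0, hBpos, hd1]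
  have hv : (0:ℝ) < α + A + (d:ℝ) + i + 1 := by linarith only [hα0, hApos, hd1, hi2]
  have h1 : (N:ℝ) + D*α = (N:ℝ)*(α + B + (d:ℝ) + 1)/(B + (d:ℝ) + 1) := by
    rw [hDval]; field_simp; ring
  have h2 : (N:ℝ) + A*α = A*(α + A + (d:ℝ) + i + 1) := by linear_combination hNA
  have h3 : (N:ℝ) + F*(α+1) = (B+1)*(α + B + (d:ℝ) + 1) := by
    rw [hF]; linear_combination hNB
  have h4 : (N:ℝ) + C*(α+1) = (N:ℝ)*(α + A + (d:ℝ) + i + 1)/(A + (d:ℝ) + i) := by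
    rw [hCval]; field_simp; ring
  have h5 : (N:ℝ) + D*t₁ = D*((N:ℝ) + F*(α+1))/(α+1) := by
    rw [ht₁, hDval, hF]; field_simp; ring
  have h6 : (N:ℝ) + E*t₁ = E*((N:ℝ) + C*(α+1))/(α+1) := by
    rw [ht₁, hE]; field_simp; linear_combination (α+1)*key1
  have h7 : (N:ℝ) + B*s₁ = B*((N:ℝ) + D*α)/α := by
    rw [hs₁]; field_simp; linear_combination α*key2
  have h8 : (N:ℝ) + C*s₁ = C*((N:ℝ) + A*α)/α := by
    rw [hs₁]; field_simp; linear_combination α*key3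
  have h9 : (N:ℝ) + E*s₂ = E*((N:ℝ) + C*s₁)/s₁ := by
    rw [hs₂, hE]; field_simp; linear_combination s₁*key1
  have h10 : (N:ℝ) + F*s₂ = F*((N:ℝ) + B*s₁)/s₁ := by
    rw [hs₂]; field_simp; linear_combination s₁*key4
  have h11 : (N:ℝ) + A*t₂ = A*((N:ℝ) + E*t₁)/t₁ := by
    rw [ht₂, hE]; field_simp; linear_combination t₁*hNA
  have h12 : (N:ℝ) + B*t₂ = B*((N:ℝ) + D*t₁)/t₁ := by
    rw [ht₂]; field_simp; linear_combination t₁*key2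
  -- positivity of log arguments
  have p1 : (0:ℝ) < (N:ℝ) + D*α := add_pos hn0 (mul_pos hDpos hα0)
  have p2 : (0:ℝ) < (N:ℝ) + A*α := add_pos hn0 (mul_pos hApos hα0)
  have p3 : (0:ℝ) < (N:ℝ) + F*(α+1) := add_pos hn0 (mul_pos hFpos hα1)
  have p4 : (0:ℝ) < (N:ℝ) + C*(α+1) := add_pos hn0 (mul_pos hCpos hα1)
  have p5 : (0:ℝ) < (N:ℝ) + D*t₁ := add_pos hn0 (mul_pos hDpos ht₁0)
  have p6 : (0:ℝ) < (N:ℝ) + E*t₁ := add_pos hn0 (mul_pos hEpos ht₁0)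
  have p7 : (0:ℝ) < (N:ℝ) + B*s₁ := add_pos hn0 (mul_pos hBpos hs₁0)
  have p8 : (0:ℝ) < (N:ℝ) + C*s₁ := add_pos hn0 (mul_pos hCpos hs₁0)
  -- atomic log expansions
  have L1 : Real.log ((N:ℝ) + D*α)
      = Real.log (N:ℝ) + Real.log (α + B + (d:ℝ) + 1) - Real.log (B + (d:ℝ) + 1) := by
    rw [h1, Real.log_div (mul_pos hn0 hu).ne' hM₂.ne', Real.log_mul hn0.ne' hu.ne']
  have L2 : Real.log ((N:ℝ) + A*α)
      = Real.log A + Real.log (α + A + (d:ℝ) + i + 1) := by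
    rw [h2, Real.log_mul hApos.ne' hv.ne']
  have L3 : Real.log ((N:ℝ) + F*(α+1))
      = Real.log (B+1) + Real.log (α + B + (d:ℝ) + 1) := by
    rw [h3, Real.log_mul hB1.ne' hu.ne']
  have L4 : Real.log ((N:ℝ) + C*(α+1))
      = Real.log (N:ℝ) + Real.log (α + A + (d:ℝ) + i + 1) - Real.log (A + (d:ℝ) + i) := by
    rw [h4, Real.log_div (mul_pos hn0 hv).ne' hM₁.ne', Real.log_mul hn0.ne' hv.ne']
  have LC : Real.log C = Real.log (N:ℝ) - Real.log (A + (d:ℝ) + i) := by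
    rw [hCval, Real.log_div hn0.ne' hM₁.ne']
  have LD : Real.log D = Real.log (N:ℝ) - Real.log (B + (d:ℝ) + 1) := by
    rw [hDval, Real.log_div hn0.ne' hM₂.ne']
  have L5 : Real.log ((N:ℝ) + D*t₁)
      = Real.log D + Real.log ((N:ℝ) + F*(α+1)) - Real.log (α+1) := by
    rw [h5, Real.log_div (mul_pos hDpos p3).ne' hα1.ne', Real.log_mul hDpos.ne' p3.ne']
  have L6 : Real.log ((N:ℝ) + E*t₁)
      = Real.log E + Real.log ((N:ℝ) + C*(α+1)) - Real.log (α+1) := by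
    rw [h6, Real.log_div (mul_pos hEpos p4).ne' hα1.ne', Real.log_mul hEpos.ne' p4.ne']
  have L7 : Real.log ((N:ℝ) + B*s₁)
      = Real.log B + Real.log ((N:ℝ) + D*α) - Real.log α := by
    rw [h7, Real.log_div (mul_pos hBpos p1).ne' hα0.ne', Real.log_mul hBpos.ne' p1.ne']
  have L8 : Real.log ((N:ℝ) + C*s₁)
      = Real.log C + Real.log ((N:ℝ) + A*α) - Real.log α := by
    rw [h8, Real.log_div (mul_pos hCpos p2).ne' hα0.ne', Real.log_mul hCpos.ne' p2.ne']
  have L9 : Real.log ((N:ℝ) + E*s₂)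
      = Real.log E + Real.log ((N:ℝ) + C*s₁) - Real.log s₁ := by
    rw [h9, Real.log_div (mul_pos hEpos p8).ne' hs₁0.ne', Real.log_mul hEpos.ne' p8.ne']
  have L10 : Real.log ((N:ℝ) + F*s₂)
      = Real.log F + Real.log ((N:ℝ) + B*s₁) - Real.log s₁ := by
    rw [h10, Real.log_div (mul_pos hFpos p7).ne' hs₁0.ne', Real.log_mul hFpos.ne' p7.ne']
  have L11 : Real.log ((N:ℝ) + A*t₂)
      = Real.log A + Real.log ((N:ℝ) + E*t₁) - Real.log t₁ := by
    rw [h11, Real.log_div (mul_pos hApos p6).ne' ht₁0.ne', Real.log_mul hApos.ne' p6.ne']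
  have L12 : Real.log ((N:ℝ) + B*t₂)
      = Real.log B + Real.log ((N:ℝ) + D*t₁) - Real.log t₁ := by
    rw [h12, Real.log_div (mul_pos hBpos p5).ne' ht₁0.ne', Real.log_mul hBpos.ne' p5.ne']
  have LE : Real.log E = Real.log (A+1) := by rw [hE]
  have LF : Real.log F = Real.log (B+1) := by rw [hF]
  -- RHS pieces
  have hR1 : (N:ℝ) - (A+1)*d = (A+1)*C := by linear_combination key1
  have hR2 : (N:ℝ) - ((d:ℝ)+i)*B = B*D := by linear_combination key2
  have LR1 : Real.log ((N:ℝ) - (A+1)*d) = Real.log (A+1) + Real.log C := by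
    rw [hR1, Real.log_mul hA1.ne' hCpos.ne']
  have LR2 : Real.log ((N:ℝ) - ((d:ℝ)+i)*B) = Real.log B + Real.log D := by
    rw [hR2, Real.log_mul hBpos.ne' hDpos.ne']
  -- evaluate the six integrals
  rw [log_aux_int (N:ℝ) D α t₁ hn0 hDpos hα0 ht₁0,
      log_aux_int (N:ℝ) E t₁ s₂ hn0 hEpos ht₁0 hs₂0,
      log_aux_int (N:ℝ) F s₂ (α+1) hn0 hFpos hs₂0 hα1,
      log_aux_int (N:ℝ) A α t₂ hn0 hApos hα0 ht₂0,
      log_aux_int (N:ℝ) B t₂ s₁ hn0 hBpos ht₂0 hs₁0,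
      log_aux_int (N:ℝ) C s₁ (α+1) hn0 hCpos hs₁0 hα1]
  rw [LR1, LR2, L9, L10, L11, L12, L5, L6, L7, L8, L1, L2, L3, L4, LC, LD, LE, LF]
  ring
end
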